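/- The set of 18 affine functions L1, ..., L18 (as above) is permuted by precomposition with each of the linear maps S, T, U, where S(λ1, λ2, μ1, μ2, ν1, ν2) = (μ1, μ2, λ1, λ2, ν1, ν2), U(λ1, λ2, μ1, μ2, ν1, ν2) = (ν1 − ν3, ν1 − ν2, μ1, μ2, ν1, ν1 − λ2), and T(λ1, λ2, μ1, μ2, ν1, ν2) = (λ1, λ1 − λ2, μ1, μ1 − μ2, λ1 + μ1 − ν3, λ1 + μ1 − ν2), with ν3 = λ1 + λ2 + μ1 + μ2 − ν1 − ν2. -/

import Mathlib

/- Points of `ℤ^6` are `(λ1, λ2, μ1, μ2, ν1, ν2)` = `(p 0, ..., p 5)`, and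
`ν3 = λ1 + λ2 + μ1 + μ2 − ν1 − ν2`. -/

def nu3 (p : Fin 6 → ℤ) : ℤ := p 0 + p 1 + p 2 + p 3 - p 4 - p 5

/-- The 18 affine functions `L1, ..., L18` (the polynomial formulas for the SL3
Littlewood–Richardson coefficient on the 18 chambers). -/
def L : Fin 18 → (Fin 6 → ℤ) → ℤ :=
  ![fun p => 1 - p 1 - p 3 + p 4,
    fun p => 1 + p 5 - nu3 p,
    fun p => 1 + p 0 + p 2 - p 4,
    fun p => 1 + p 4 - p 5,
    fun p => 1 + p 1 + p 3 - nu3 p,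
    fun p => 1 + nu3 p,
    fun p => 1 + p 2 - nu3 p,
    fun p => 1 + p 0 - nu3 p,
    fun p => 1 + p 0 - p 1,
    fun p => 1 + p 2 - p 3,
    fun p => 1 - p 1 + p 5,
    fun p => 1 - p 3 + p 5,
    fun p => 1 - p 0 + p 4,
    fun p => 1 - p 2 + p 4,
    fun p => 1 + p 3,
    fun p => 1 + p 1,
    fun p => 1 + p 0 + p 3 - p 5,
    fun p => 1 + p 1 + p 2 - p 5]

/-- The linear map `X(λ1, λ2, μ1, μ2, ν1, ν2) = (λ1+μ1−ν2, λ2+μ1−ν2, ν2, μ2, ν1, μ1)`. -/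
def X (p : Fin 6 → ℤ) : Fin 6 → ℤ :=
  ![p 0 + p 2 - p 5, p 1 + p 2 - p 5, p 5, p 3, p 4, p 2]


/-- `S(λ1, λ2, μ1, μ2, ν1, ν2) = (μ1, μ2, λ1, λ2, ν1, ν2)`. -/
def S (p : Fin 6 → ℤ) : Fin 6 → ℤ := ![p 2, p 3, p 0, p 1, p 4, p 5]

/-- `U(λ1, λ2, μ1, μ2, ν1, ν2) = (ν1 − ν3, ν1 − ν2, μ1, μ2, ν1, ν1 − λ2)`. -/
def U (p : Fin 6 → ℤ) : Fin 6 → ℤ :=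
  ![p 4 - nu3 p, p 4 - p 5, p 2, p 3, p 4, p 4 - p 1]

/-- `T(λ1, λ2, μ1, μ2, ν1, ν2) = (λ1, λ1 − λ2, μ1, μ1 − μ2, λ1 + μ1 − ν3, λ1 + μ1 − ν2)`. -/
def T (p : Fin 6 → ℤ) : Fin 6 → ℤ :=
  ![p 0, p 0 - p 1, p 2, p 2 - p 3, p 0 + p 2 - nu3 p, p 0 + p 2 - p 5]


lemma hS : (fun i => (L i) ∘ S) = L ∘ (![0,1,2,3,4,5,7,6,9,8,11,10,13,12,15,14,17,16] : Fin 18 → Fin 18) := by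
  funext i p
  fin_cases i
  · show (1 - p 3 - p 1 + p 4 : ℤ) = 1 - p 1 - p 3 + p 4; ring
  · show (1 + p 5 - (p 2 + p 3 + p 0 + p 1 - p 4 - p 5) : ℤ) = 1 + p 5 - (p 0 + p 1 + p 2 + p 3 - p 4 - p 5); ring
  · show (1 + p 2 + p 0 - p 4 : ℤ) = 1 + p 0 + p 2 - p 4; ring
  · show (1 + p 4 - p 5 : ℤ) = 1 + p 4 - p 5; ring
  · show (1 + p 3 + p 1 - (p 2 + p 3 + p 0 + p 1 - p 4 - p 5) : ℤ) = 1 + p 1 + p 3 - (p 0 + p 1 + p 2 + p 3 - p 4 - p 5); ring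
  · show (1 + (p 2 + p 3 + p 0 + p 1 - p 4 - p 5) : ℤ) = 1 + (p 0 + p 1 + p 2 + p 3 - p 4 - p 5); ring
  · show (1 + p 0 - (p 2 + p 3 + p 0 + p 1 - p 4 - p 5) : ℤ) = 1 + p 0 - (p 0 + p 1 + p 2 + p 3 - p 4 - p 5); ring
  · show (1 + p 2 - (p 2 + p 3 + p 0 + p 1 - p 4 - p 5) : ℤ) = 1 + p 2 - (p 0 + p 1 + p 2 + p 3 - p 4 - p 5); ring
  · show (1 + p 2 - p 3 : ℤ) = 1 + p 2 - p 3; ring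
  · show (1 + p 0 - p 1 : ℤ) = 1 + p 0 - p 1; ring
  · show (1 - p 3 + p 5 : ℤ) = 1 - p 3 + p 5; ring
  · show (1 - p 1 + p 5 : ℤ) = 1 - p 1 + p 5; ring
  · show (1 - p 2 + p 4 : ℤ) = 1 - p 2 + p 4; ring
  · show (1 - p 0 + p 4 : ℤ) = 1 - p 0 + p 4; ring
  · show (1 + p 1 : ℤ) = 1 + p 1; ring
  · show (1 + p 3 : ℤ) = 1 + p 3; ring
  · show (1 + p 2 + p 1 - p 5 : ℤ) = 1 + p 1 + p 2 - p 5; ring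
  · show (1 + p 3 + p 0 - p 5 : ℤ) = 1 + p 0 + p 3 - p 5; ring

lemma rS : Set.range (fun i => (L i) ∘ S) = Set.range L := by
  rw [hS, Set.range_comp, Set.range_eq_univ.mpr (by decide), Set.image_univ]

lemma hT : (fun i => (L i) ∘ T) = L ∘ (![4,3,5,1,0,2,12,13,15,14,17,16,6,7,9,8,11,10] : Fin 18 → Fin 18) := by
  funext i p
  fin_cases i
  · show (1 - (p 0 - p 1) - (p 2 - p 3) + (p 0 + p 2 - (p 0 + p 1 + p 2 + p 3 - p 4 - p 5)) : ℤ) = 1 + p 1 + p 3 - (p 0 + p 1 + p 2 + p 3 - p 4 - p 5); ring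
  · show (1 + (p 0 + p 2 - p 5) - (p 0 + (p 0 - p 1) + p 2 + (p 2 - p 3) - (p 0 + p 2 - (p 0 + p 1 + p 2 + p 3 - p 4 - p 5)) - (p 0 + p 2 - p 5)) : ℤ) = 1 + p 4 - p 5; ring
  · show (1 + p 0 + p 2 - (p 0 + p 2 - (p 0 + p 1 + p 2 + p 3 - p 4 - p 5)) : ℤ) = 1 + (p 0 + p 1 + p 2 + p 3 - p 4 - p 5); ring
  · show (1 + (p 0 + p 2 - (p 0 + p 1 + p 2 + p 3 - p 4 - p 5)) - (p 0 + p 2 - p 5) : ℤ) = 1 + p 5 - (p 0 + p 1 + p 2 + p 3 - p 4 - p 5); ring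
  · show (1 + (p 0 - p 1) + (p 2 - p 3) - (p 0 + (p 0 - p 1) + p 2 + (p 2 - p 3) - (p 0 + p 2 - (p 0 + p 1 + p 2 + p 3 - p 4 - p 5)) - (p 0 + p 2 - p 5)) : ℤ) = 1 - p 1 - p 3 + p 4; ring
  · show (1 + (p 0 + (p 0 - p 1) + p 2 + (p 2 - p 3) - (p 0 + p 2 - (p 0 + p 1 + p 2 + p 3 - p 4 - p 5)) - (p 0 + p 2 - p 5)) : ℤ) = 1 + p 0 + p 2 - p 4; ring
  · show (1 + p 2 - (p 0 + (p 0 - p 1) + p 2 + (p 2 - p 3) - (p 0 + p 2 - (p 0 + p 1 + p 2 + p 3 - p 4 - p 5)) - (p 0 + p 2 - p 5)) : ℤ) = 1 - p 0 + p 4; ring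
  · show (1 + p 0 - (p 0 + (p 0 - p 1) + p 2 + (p 2 - p 3) - (p 0 + p 2 - (p 0 + p 1 + p 2 + p 3 - p 4 - p 5)) - (p 0 + p 2 - p 5)) : ℤ) = 1 - p 2 + p 4; ring
  · show (1 + p 0 - (p 0 - p 1) : ℤ) = 1 + p 1; ring
  · show (1 + p 2 - (p 2 - p 3) : ℤ) = 1 + p 3; ring
  · show (1 - (p 0 - p 1) + (p 0 + p 2 - p 5) : ℤ) = 1 + p 1 + p 2 - p 5; ring
  · show (1 - (p 2 - p 3) + (p 0 + p 2 - p 5) : ℤ) = 1 + p 0 + p 3 - p 5; ring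
  · show (1 - p 0 + (p 0 + p 2 - (p 0 + p 1 + p 2 + p 3 - p 4 - p 5)) : ℤ) = 1 + p 2 - (p 0 + p 1 + p 2 + p 3 - p 4 - p 5); ring
  · show (1 - p 2 + (p 0 + p 2 - (p 0 + p 1 + p 2 + p 3 - p 4 - p 5)) : ℤ) = 1 + p 0 - (p 0 + p 1 + p 2 + p 3 - p 4 - p 5); ring
  · show (1 + (p 2 - p 3) : ℤ) = 1 + p 2 - p 3; ring
  · show (1 + (p 0 - p 1) : ℤ) = 1 + p 0 - p 1; ring
  · show (1 + p 0 + (p 2 - p 3) - (p 0 + p 2 - p 5) : ℤ) = 1 - p 3 + p 5; ring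
  · show (1 + (p 0 - p 1) + p 2 - (p 0 + p 2 - p 5) : ℤ) = 1 - p 1 + p 5; ring

lemma rT : Set.range (fun i => (L i) ∘ T) = Set.range L := by
  rw [hT, Set.range_comp, Set.range_eq_univ.mpr (by decide), Set.image_univ]

lemma hU : (fun i => (L i) ∘ U) = L ∘ (![11,8,6,15,16,12,2,7,1,9,10,0,5,13,14,3,4,17] : Fin 18 → Fin 18) := by
  funext i p
  fin_cases i
  · show (1 - (p 4 - p 5) - p 3 + p 4 : ℤ) = 1 - p 3 + p 5; ring
  · show (1 + (p 4 - p 1) - ((p 4 - (p 0 + p 1 + p 2 + p 3 - p 4 - p 5)) + (p 4 - p 5) + p 2 + p 3 - p 4 - (p 4 - p 1)) : ℤ) = 1 + p 0 - p 1; ring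
  · show (1 + (p 4 - (p 0 + p 1 + p 2 + p 3 - p 4 - p 5)) + p 2 - p 4 : ℤ) = 1 + p 2 - (p 0 + p 1 + p 2 + p 3 - p 4 - p 5); ring
  · show (1 + p 4 - (p 4 - p 1) : ℤ) = 1 + p 1; ring
  · show (1 + (p 4 - p 5) + p 3 - ((p 4 - (p 0 + p 1 + p 2 + p 3 - p 4 - p 5)) + (p 4 - p 5) + p 2 + p 3 - p 4 - (p 4 - p 1)) : ℤ) = 1 + p 0 + p 3 - p 5; ring
  · show (1 + ((p 4 - (p 0 + p 1 + p 2 + p 3 - p 4 - p 5)) + (p 4 - p 5) + p 2 + p 3 - p 4 - (p 4 - p 1)) : ℤ) = 1 - p 0 + p 4; ring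
  · show (1 + p 2 - ((p 4 - (p 0 + p 1 + p 2 + p 3 - p 4 - p 5)) + (p 4 - p 5) + p 2 + p 3 - p 4 - (p 4 - p 1)) : ℤ) = 1 + p 0 + p 2 - p 4; ring
  · show (1 + (p 4 - (p 0 + p 1 + p 2 + p 3 - p 4 - p 5)) - ((p 4 - (p 0 + p 1 + p 2 + p 3 - p 4 - p 5)) + (p 4 - p 5) + p 2 + p 3 - p 4 - (p 4 - p 1)) : ℤ) = 1 + p 0 - (p 0 + p 1 + p 2 + p 3 - p 4 - p 5); ring
  · show (1 + (p 4 - (p 0 + p 1 + p 2 + p 3 - p 4 - p 5)) - (p 4 - p 5) : ℤ) = 1 + p 5 - (p 0 + p 1 + p 2 + p 3 - p 4 - p 5); ring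
  · show (1 + p 2 - p 3 : ℤ) = 1 + p 2 - p 3; ring
  · show (1 - (p 4 - p 5) + (p 4 - p 1) : ℤ) = 1 - p 1 + p 5; ring
  · show (1 - p 3 + (p 4 - p 1) : ℤ) = 1 - p 1 - p 3 + p 4; ring
  · show (1 - (p 4 - (p 0 + p 1 + p 2 + p 3 - p 4 - p 5)) + p 4 : ℤ) = 1 + (p 0 + p 1 + p 2 + p 3 - p 4 - p 5); ring
  · show (1 - p 2 + p 4 : ℤ) = 1 - p 2 + p 4; ring
  · show (1 + p 3 : ℤ) = 1 + p 3; ring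
  · show (1 + (p 4 - p 5) : ℤ) = 1 + p 4 - p 5; ring
  · show (1 + (p 4 - (p 0 + p 1 + p 2 + p 3 - p 4 - p 5)) + p 3 - (p 4 - p 1) : ℤ) = 1 + p 1 + p 3 - (p 0 + p 1 + p 2 + p 3 - p 4 - p 5); ring
  · show (1 + (p 4 - p 5) + p 2 - (p 4 - p 1) : ℤ) = 1 + p 1 + p 2 - p 5; ring

lemma rU : Set.range (fun i => (L i) ∘ U) = Set.range L := by
  rw [hU, Set.range_comp, Set.range_eq_univ.mpr (by decide), Set.image_univ]

theorem STU_permute_formulas :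
    Set.range (fun i => (L i) ∘ S) = Set.range L ∧
    Set.range (fun i => (L i) ∘ T) = Set.range L ∧
    Set.range (fun i => (L i) ∘ U) = Set.range L :=
  ⟨rS, rT, rU⟩
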